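/- Let g : X × ℝ^d → ℝ^d and suppose Cov(gᵢ(x,·), gⱼ(x',·)) (over the randomness of a GP prior on g) has the LMC form ∑ᵣ bᵣ bᵣᵀ kᵣ with orthonormal bᵣ. Then for ĝ(x,w) := Bᵀ g(x, B' w) with B = [b₁,…,b_R], the components ĝᵣ are mutually uncorrelated, with Cov(ĝᵣ(x,w), ĝ_{r'}(x',w')) = δ_{rr'} kᵣ((x, B'w), (x', B'w')). -/

import Mathlib

/-!
Projecting onto `bᵣ` turns the covariance of `g` into `bᵣᵀ (∑ₛ bₛ bₛᵀ kₛ) b_{r'}` by bilinearity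
of the integral, and orthonormality collapses this sum to `δ_{rr'} kᵣ`. Evaluating `g` at the
lifted input `B' w` only changes the arguments of the kernels.
-/

open Matrix MeasureTheory

theorem integral_dotProduct_mul_dotProduct {Ω ι : Type*} [MeasurableSpace Ω] {μ : Measure Ω}
    [Fintype ι] {U V : Ω → ι → ℝ} (hUV : ∀ i j, Integrable (fun ω => U ω i * V ω j) μ)
    (a c : ι → ℝ) :
    ∫ ω, (a ⬝ᵥ U ω) * (c ⬝ᵥ V ω) ∂μ =
      a ⬝ᵥ (Matrix.of fun i j => ∫ ω, U ω i * V ω j ∂μ) *ᵥ c := by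
  have hexpand : (fun ω => (a ⬝ᵥ U ω) * (c ⬝ᵥ V ω)) =
      fun ω => ∑ i, ∑ j, a i * c j * (U ω i * V ω j) := by
    funext ω
    simp only [dotProduct, Finset.sum_mul_sum]
    exact Finset.sum_congr rfl fun i _ => Finset.sum_congr rfl fun j _ => by ring
  have hterm : ∀ i j, Integrable (fun ω => a i * c j * (U ω i * V ω j)) μ :=
    fun i j => (hUV i j).const_mul _
  rw [hexpand, integral_finsetSum _ fun i _ => integrable_finsetSum _ fun j _ => hterm i j]
  simp only [integral_finsetSum _ fun j _ => hterm _ j, integral_const_mul, dotProduct, mulVec,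
    of_apply, Finset.mul_sum]
  exact Finset.sum_congr rfl fun i _ => Finset.sum_congr rfl fun j _ => by ring

theorem dotProduct_mulVec_lmc_of_orthonormal {ι κ α : Type*} [Fintype ι] [Fintype κ]
    [DecidableEq κ] [CommSemiring α] {b : κ → ι → α}
    (horth : ∀ r r', b r ⬝ᵥ b r' = if r = r' then 1 else 0) (c : κ → α) (r r' : κ) :
    b r ⬝ᵥ (Matrix.of fun i j => ∑ s, b s i * b s j * c s) *ᵥ b r' = if r = r' then c r else 0 := by
  have hlmc : (Matrix.of fun i j => ∑ s, b s i * b s j * c s) = ∑ s, c s • vecMulVec (b s) (b s) := by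
    ext i j
    simp only [of_apply, Matrix.sum_apply, Matrix.smul_apply, vecMulVec_apply, smul_eq_mul]
    exact Finset.sum_congr rfl fun s _ => by ring
  simp only [hlmc, sum_mulVec, smul_mulVec, vecMulVec_mulVec, dotProduct_sum, dotProduct_smul,
    horth, smul_eq_mul, op_smul_eq_smul]
  simp [eq_comm]

theorem projected_autoregressive_decomposes_general {Ω X : Type*} [MeasureSpace Ω]
    {d R R' : ℕ}
    (g : Ω → X → (Fin d → ℝ) → Fin d → ℝ)
    (b : Fin R → Fin d → ℝ)
    (horth : ∀ r r', b r ⬝ᵥ b r' = if r = r' then 1 else 0)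
    (k : Fin R → (X × (Fin d → ℝ)) → (X × (Fin d → ℝ)) → ℝ)
    (hint : ∀ x w x' w' i j,
      Integrable (fun ω => g ω x w i * g ω x' w' j))
    (hcov : ∀ x w x' w' i j, (∫ ω, g ω x w i * g ω x' w' j) =
      ∑ r, b r i * b r j * k r (x, w) (x', w'))
    (B' : Matrix (Fin d) (Fin R') ℝ)
    (ghat : Ω → X → (Fin R' → ℝ) → Fin R → ℝ)
    (hghat : ∀ ω x w r, ghat ω x w r = b r ⬝ᵥ g ω x (B'.mulVec w)) :
    ∀ x w x' w' r r',
      (∫ ω, ghat ω x w r * ghat ω x' w' r') =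
        if r = r' then k r (x, B'.mulVec w) (x', B'.mulVec w') else 0 := by
  intro x w x' w' r r'
  simp only [hghat]
  rw [integral_dotProduct_mul_dotProduct (hint x _ x' _)]
  simp only [hcov]
  exact dotProduct_mulVec_lmc_of_orthonormal horth _ r r'

/-- Theorem 1 of the paper: if the autoregressive map `g` has an LMC covariance
`∑ᵣ bᵣ bᵣᵀ kᵣ` with orthonormal bases, then the projected map
`ĝ(x,w) = Bᵀ g(x, B'w)` has mutually uncorrelated components, with
`Cov(ĝᵣ(x,w), ĝ_{r'}(x',w')) = δ_{rr'} kᵣ((x,B'w),(x',B'w'))`. -/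
theorem projected_autoregressive_decomposes {Ω X : Type*} [MeasureSpace Ω]
    (hprob : IsProbabilityMeasure (volume : Measure Ω))
    {d R R' : ℕ}
    (g : Ω → X → (Fin d → ℝ) → Fin d → ℝ)
    (b : Fin R → Fin d → ℝ)
    (horth : ∀ r r', b r ⬝ᵥ b r' = if r = r' then 1 else 0)
    (k : Fin R → (X × (Fin d → ℝ)) → (X × (Fin d → ℝ)) → ℝ)
    (hint : ∀ x w x' w' i j,
      Integrable (fun ω => g ω x w i * g ω x' w' j))
    (hmean : ∀ x w i, (∫ ω, g ω x w i) = 0)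
    (hcov : ∀ x w x' w' i j, (∫ ω, g ω x w i * g ω x' w' j) =
      ∑ r, b r i * b r j * k r (x, w) (x', w'))
    (B' : Matrix (Fin d) (Fin R') ℝ)
    (ghat : Ω → X → (Fin R' → ℝ) → Fin R → ℝ)
    (hghat : ∀ ω x w r, ghat ω x w r = b r ⬝ᵥ g ω x (B'.mulVec w)) :
    ∀ x w x' w' r r',
      (∫ ω, ghat ω x w r * ghat ω x' w' r') =
        if r = r' then k r (x, B'.mulVec w) (x', B'.mulVec w') else 0 :=
  projected_autoregressive_decomposes_general g b horth k hint hcov B' ghat hghat
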